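/- arXiv:2105.12308 — 2 statements merged into one kernel-verified Lean document; each statement's English description precedes it below -/
import Mathlib

section
/- There is a universal constant C > 0 such that for every f ∈ C_c^∞(ℝ²) for which ‖f‖_{Q¹_{∂y}} and ‖f‖_{Q^{1/2}_{y∂x}} are both finite and nonzero, one has ‖f‖_{Q^{1/3}_{∂x}} ≤ C ‖f‖_{Q¹_{∂y}}^{1/3} ‖f‖_{Q^{1/2}_{y∂x}}^{2/3}. -/
open MeasureTheory ENNReal Real

noncomputable section

/-- `‖f‖_{Q^{1/3}_{∂x}} = sup_{h ≠ 0} |h|⁻¹ ‖f(x+h³,y) - f(x,y)‖_{L²(ℝ²)}`. -/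
def Q13 (f : ℝ × ℝ → ℝ) : ℝ≥0∞ :=
  ⨆ h : {h : ℝ // h ≠ 0}, ENNReal.ofReal |(h : ℝ)|⁻¹ *
    eLpNorm (fun p : ℝ × ℝ => f (p.1 + (h : ℝ) ^ 3, p.2) - f p) 2 volume

/-- `‖f‖_{Q¹_{∂y}} = sup_{h ≠ 0} |h|⁻¹ ‖f(x,y+h) - f(x,y)‖_{L²(ℝ²)}`. -/
def Q1y (f : ℝ × ℝ → ℝ) : ℝ≥0∞ :=
  ⨆ h : {h : ℝ // h ≠ 0}, ENNReal.ofReal |(h : ℝ)|⁻¹ *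
    eLpNorm (fun p : ℝ × ℝ => f (p.1, p.2 + (h : ℝ)) - f p) 2 volume

/-- `‖f‖_{Q^{1/2}_{y∂x}} = sup_{h ≠ 0} |h|⁻¹ ‖f(x + sgn(h) h² y, y) - f(x,y)‖_{L²(ℝ²)}`. -/
def Q12 (f : ℝ × ℝ → ℝ) : ℝ≥0∞ :=
  ⨆ h : {h : ℝ // h ≠ 0}, ENNReal.ofReal |(h : ℝ)|⁻¹ *
    eLpNorm (fun p : ℝ × ℝ =>
      f (p.1 + Real.sign (h : ℝ) * (h : ℝ) ^ 2 * p.2, p.2) - f p) 2 volume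

lemma mp_xshift (c : ℝ) : MeasurePreserving (fun p : ℝ × ℝ => (p.1 + c, p.2)) volume volume := by
  rw [show (volume : Measure (ℝ × ℝ)) = (volume : Measure ℝ).prod volume from Measure.volume_eq_prod ℝ ℝ]
  exact (measurePreserving_add_right volume c).prod (MeasurePreserving.id _)

lemma mp_yshift (c : ℝ) : MeasurePreserving (fun p : ℝ × ℝ => (p.1, p.2 + c)) volume volume := by
  rw [show (volume : Measure (ℝ × ℝ)) = (volume : Measure ℝ).prod volume from Measure.volume_eq_prod ℝ ℝ]
  exact (MeasurePreserving.id _).prod (measurePreserving_add_right volume c)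

lemma mp_shear (t : ℝ) : MeasurePreserving (fun p : ℝ × ℝ => (p.1 + t * p.2, p.2)) volume volume := by
  rw [show (volume : Measure (ℝ × ℝ)) = (volume : Measure ℝ).prod volume from Measure.volume_eq_prod ℝ ℝ]
  have hF : MeasurePreserving (fun p : ℝ × ℝ => (p.1, p.2 + t * p.1))
      ((volume : Measure ℝ).prod volume) ((volume : Measure ℝ).prod volume) := by
    refine (MeasurePreserving.id _).skew_product (g := fun y x => x + t * y) ?_ ?_
    · exact measurable_snd.add (measurable_const.mul measurable_fst)
    · exact Filter.Eventually.of_forall fun y => (measurePreserving_add_right volume (t * y)).map_eq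
  exact (Measure.measurePreserving_swap.comp hF).comp Measure.measurePreserving_swap

/-- Unfold a supremum bound. -/
lemma sup_term_le {c : ℝ} (hc : 0 < c) {N Q : ℝ≥0∞}
    (h : ENNReal.ofReal c⁻¹ * N ≤ Q) : N ≤ ENNReal.ofReal c * Q := by
  have hN : N = ENNReal.ofReal c * (ENNReal.ofReal c⁻¹ * N) := by
    rw [← mul_assoc, ← ENNReal.ofReal_mul hc.le, mul_inv_cancel₀ hc.ne', ENNReal.ofReal_one,
      one_mul]
  rw [hN]
  exact mul_le_mul_right h _

lemma yshift_bound (f : ℝ × ℝ → ℝ) (a : ℝ) (ha : a ≠ 0) :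
    eLpNorm (fun p : ℝ × ℝ => f (p.1, p.2 + a) - f p) 2 volume
      ≤ ENNReal.ofReal |a| * Q1y f := by
  refine sup_term_le (abs_pos.2 ha) ?_
  exact le_iSup (fun h : {h : ℝ // h ≠ 0} => ENNReal.ofReal |(h : ℝ)|⁻¹ *
    eLpNorm (fun p : ℝ × ℝ => f (p.1, p.2 + (h : ℝ)) - f p) 2 volume) ⟨a, ha⟩

lemma shear_bound_pos (f : ℝ × ℝ → ℝ) (k : ℝ) (hk : k ≠ 0) :
    eLpNorm (fun p : ℝ × ℝ => f (p.1 + k ^ 2 * p.2, p.2) - f p) 2 volume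
      ≤ ENNReal.ofReal |k| * Q12 f := by
  refine sup_term_le (abs_pos.2 hk) ?_
  have h1 := le_iSup (fun h : {h : ℝ // h ≠ 0} => ENNReal.ofReal |(h : ℝ)|⁻¹ *
    eLpNorm (fun p : ℝ × ℝ =>
      f (p.1 + Real.sign (h : ℝ) * (h : ℝ) ^ 2 * p.2, p.2) - f p) 2 volume)
    ⟨|k|, (abs_pos.2 hk).ne'⟩
  simpa [Q12, Real.sign_of_pos (abs_pos.2 hk), sq_abs] using h1

lemma shear_bound_neg (f : ℝ × ℝ → ℝ) (k : ℝ) (hk : k ≠ 0) :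
    eLpNorm (fun p : ℝ × ℝ => f (p.1 + -(k ^ 2) * p.2, p.2) - f p) 2 volume
      ≤ ENNReal.ofReal |k| * Q12 f := by
  refine sup_term_le (abs_pos.2 hk) ?_
  have h1 := le_iSup (fun h : {h : ℝ // h ≠ 0} => ENNReal.ofReal |(h : ℝ)|⁻¹ *
    eLpNorm (fun p : ℝ × ℝ =>
      f (p.1 + Real.sign (h : ℝ) * (h : ℝ) ^ 2 * p.2, p.2) - f p) 2 volume)
    ⟨-|k|, (neg_ne_zero.2 (abs_pos.2 hk).ne')⟩
  simpa [Q12, Real.sign_of_neg (neg_lt_zero.2 (abs_pos.2 hk)), sq_abs] using h1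

/-- Symmetry in the shift direction. -/
lemma xshift_sym (f : ℝ × ℝ → ℝ) (hf : Continuous f) (c : ℝ) :
    eLpNorm (fun p : ℝ × ℝ => f (p.1 + c, p.2) - f p) 2 volume
      = eLpNorm (fun p : ℝ × ℝ => f (p.1 + -c, p.2) - f p) 2 volume := by
  have hg : AEStronglyMeasurable (fun p : ℝ × ℝ => f (p.1 + c, p.2) - f p) volume := by
    exact ((hf.comp (by fun_prop)).sub hf).aestronglyMeasurable
  have := (eLpNorm_comp_measurePreserving (p := 2) hg (mp_xshift (-c))).symm
  rw [this]
  have : ((fun p : ℝ × ℝ => f (p.1 + c, p.2) - f p) ∘ fun p : ℝ × ℝ => (p.1 + -c, p.2))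
      = -(fun p : ℝ × ℝ => f (p.1 + -c, p.2) - f p) := by
    funext p
    simp only [Function.comp_apply, Pi.neg_apply]
    ring_nf
  rw [this, eLpNorm_neg]

/-- The commutator telescoping bound. -/
lemma telescope_bound (f : ℝ × ℝ → ℝ) (hf : Continuous f) (k a : ℝ) (hk : k ≠ 0) (ha : a ≠ 0) :
    eLpNorm (fun p : ℝ × ℝ => f (p.1 + k ^ 2 * a, p.2) - f p) 2 volume
      ≤ 2 * (ENNReal.ofReal |a| * Q1y f) + 2 * (ENNReal.ofReal |k| * Q12 f) := by
  set g1 : ℝ × ℝ → ℝ := fun p => f (p.1 + -(k ^ 2) * p.2, p.2) - f p with hg1def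
  set g2 : ℝ × ℝ → ℝ := fun p => f (p.1, p.2 + -a) - f p with hg2def
  set g3 : ℝ × ℝ → ℝ := fun p => f (p.1 + k ^ 2 * p.2, p.2) - f p with hg3def
  set g4 : ℝ × ℝ → ℝ := fun p => f (p.1, p.2 + a) - f p with hg4def
  set M1 : ℝ × ℝ → ℝ × ℝ := fun p => (p.1, p.2 + a) with hM1def
  set M3 : ℝ × ℝ → ℝ × ℝ := fun p => (p.1 + k ^ 2 * p.2 + k ^ 2 * a, p.2) with hM3def
  set M2 : ℝ × ℝ → ℝ × ℝ := fun p => (p.1 + k ^ 2 * p.2 + k ^ 2 * a, p.2 + a) with hM2def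
  have hM3 : MeasurePreserving M3 volume volume := (mp_xshift (k ^ 2 * a)).comp (mp_shear (k ^ 2))
  have hM2 : MeasurePreserving M2 volume volume := (mp_yshift a).comp hM3
  have hM1 : MeasurePreserving M1 volume volume := mp_yshift a
  have hcg1 : Continuous g1 := (hf.comp (by fun_prop)).sub hf
  have hcg2 : Continuous g2 := (hf.comp (by fun_prop)).sub hf
  have hcg3 : Continuous g3 := (hf.comp (by fun_prop)).sub hf
  have hcg4 : Continuous g4 := (hf.comp (by fun_prop)).sub hf
  have key : (fun p : ℝ × ℝ => f (p.1 + k ^ 2 * a, p.2) - f p)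
      = (g1 ∘ M3) + ((g2 ∘ M2) + ((g3 ∘ M1) + g4)) := by
    funext p
    simp only [hg1def, hg2def, hg3def, hg4def, hM1def, hM2def, hM3def, Pi.add_apply,
      Function.comp_apply]
    ring_nf
  have T : ∀ u v : ℝ × ℝ → ℝ, Continuous u → Continuous v →
      eLpNorm (u + v) 2 volume ≤ eLpNorm u 2 volume + eLpNorm v 2 volume := fun u v hu hv =>
    eLpNorm_add_le hu.aestronglyMeasurable hv.aestronglyMeasurable one_le_two
  have e1 : eLpNorm (g1 ∘ M3) 2 volume = eLpNorm g1 2 volume :=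
    eLpNorm_comp_measurePreserving hcg1.aestronglyMeasurable hM3
  have e2 : eLpNorm (g2 ∘ M2) 2 volume = eLpNorm g2 2 volume :=
    eLpNorm_comp_measurePreserving hcg2.aestronglyMeasurable hM2
  have e3 : eLpNorm (g3 ∘ M1) 2 volume = eLpNorm g3 2 volume :=
    eLpNorm_comp_measurePreserving hcg3.aestronglyMeasurable hM1
  calc eLpNorm (fun p : ℝ × ℝ => f (p.1 + k ^ 2 * a, p.2) - f p) 2 volume
      = eLpNorm ((g1 ∘ M3) + ((g2 ∘ M2) + ((g3 ∘ M1) + g4))) 2 volume := by rw [key]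
    _ ≤ eLpNorm (g1 ∘ M3) 2 volume + (eLpNorm (g2 ∘ M2) 2 volume
        + (eLpNorm (g3 ∘ M1) 2 volume + eLpNorm g4 2 volume)) := by
        have c3 : Continuous (g1 ∘ M3) := hcg1.comp (by rw [hM3def]; fun_prop)
        have c2 : Continuous (g2 ∘ M2) := hcg2.comp (by rw [hM2def]; fun_prop)
        have c1 : Continuous (g3 ∘ M1) := hcg3.comp (by rw [hM1def]; fun_prop)
        refine le_trans (T _ _ c3 (c2.add (c1.add hcg4))) ?_
        gcongr
        refine le_trans (T _ _ c2 (c1.add hcg4)) ?_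
        gcongr
        exact T _ _ c1 hcg4
    _ = eLpNorm g1 2 volume + (eLpNorm g2 2 volume
        + (eLpNorm g3 2 volume + eLpNorm g4 2 volume)) := by rw [e1, e2, e3]
    _ ≤ (ENNReal.ofReal |k| * Q12 f) + ((ENNReal.ofReal |a| * Q1y f)
        + ((ENNReal.ofReal |k| * Q12 f) + (ENNReal.ofReal |a| * Q1y f))) := by
        refine add_le_add (shear_bound_neg f k hk) (add_le_add ?_ (add_le_add
          (shear_bound_pos f k hk) (yshift_bound f a ha)))
        simpa [abs_neg] using yshift_bound f (-a) (neg_ne_zero.2 ha)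
    _ = 2 * (ENNReal.ofReal |a| * Q1y f) + 2 * (ENNReal.ofReal |k| * Q12 f) := by ring

lemma calc1 (A B : ℝ) (hA : 0 < A) (hB : 0 < B) :
    ((A / B) ^ ((1:ℝ)/3)) * B = A ^ ((1:ℝ)/3) * B ^ ((2:ℝ)/3) := by
  rw [Real.div_rpow hA.le hB.le, div_mul_eq_mul_div, mul_div_assoc]
  congr 1
  rw [show B / B ^ ((1:ℝ)/3) = B ^ (1:ℝ) / B ^ ((1:ℝ)/3) by rw [Real.rpow_one],
    ← Real.rpow_sub hB]
  norm_num

lemma calc2 (A B : ℝ) (hA : 0 < A) (hB : 0 < B) :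
    (1 / ((A / B) ^ ((1:ℝ)/3)) ^ 2) * A = A ^ ((1:ℝ)/3) * B ^ ((2:ℝ)/3) := by
  have h1 : ((A / B) ^ ((1:ℝ)/3)) ^ 2 = (A/B) ^ ((2:ℝ)/3) := by
    rw [← Real.rpow_natCast ((A/B) ^ ((1:ℝ)/3)) 2, ← Real.rpow_mul (by positivity)]
    norm_num
  rw [h1, Real.div_rpow hA.le hB.le]
  rw [one_div, inv_div, div_mul_eq_mul_div, mul_div_assoc, mul_comm]
  congr 1
  rw [show A / A ^ ((2:ℝ)/3) = A ^ (1:ℝ) / A ^ ((2:ℝ)/3) by rw [Real.rpow_one],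
    ← Real.rpow_sub hA]
  norm_num


/-- Sample bracket inequality (multiplicative form):
`‖f‖_{Q^{1/3}_{∂x}} ≤ C ‖f‖_{Q¹_{∂y}}^{1/3} ‖f‖_{Q^{1/2}_{y∂x}}^{2/3}`. -/
theorem sample_bracket_inequality :
    ∃ C : ℝ, 0 < C ∧ ∀ f : ℝ × ℝ → ℝ, ContDiff ℝ (⊤ : ℕ∞) f → HasCompactSupport f →
      Q1y f ≠ 0 → Q1y f ≠ ⊤ → Q12 f ≠ 0 → Q12 f ≠ ⊤ →
      Q13 f ≤ ENNReal.ofReal C * Q1y f ^ ((1 : ℝ) / 3) * Q12 f ^ ((2 : ℝ) / 3) := by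
  refine ⟨4, by norm_num, fun f hcd _ hA0 hAt hB0 hBt => ?_⟩
  have hf : Continuous f := hcd.continuous
  set A := (Q1y f).toReal with hAdef
  set B := (Q12 f).toReal with hBdef
  have hA : 0 < A := ENNReal.toReal_pos hA0 hAt
  have hB : 0 < B := ENNReal.toReal_pos hB0 hBt
  have hQA : Q1y f = ENNReal.ofReal A := (ENNReal.ofReal_toReal hAt).symm
  have hQB : Q12 f = ENNReal.ofReal B := (ENNReal.ofReal_toReal hBt).symm
  set D := A ^ ((1:ℝ)/3) * B ^ ((2:ℝ)/3) with hDdef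
  have hD : 0 < D := by positivity
  have hRHS : ENNReal.ofReal 4 * Q1y f ^ ((1:ℝ)/3) * Q12 f ^ ((2:ℝ)/3)
      = ENNReal.ofReal (4 * D) := by
    rw [hQA, hQB, ENNReal.ofReal_rpow_of_pos hA, ENNReal.ofReal_rpow_of_pos hB,
      ← ENNReal.ofReal_mul (by norm_num), ← ENNReal.ofReal_mul (by positivity), hDdef, mul_assoc]
  rw [hRHS]
  refine iSup_le ?_
  rintro ⟨h, hh⟩
  have hh' : 0 < |h| := abs_pos.2 hh
  set s := (A / B) ^ ((1:ℝ)/3) with hsdef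
  have hs : 0 < s := by positivity
  set k := |h| * s with hkdef
  have hk : 0 < k := by positivity
  set a := |h| / s ^ 2 with hadef
  have ha : 0 < a := by positivity
  have hka : k ^ 2 * a = |h| ^ 3 := by
    rw [hkdef, hadef]; field_simp
  have hnorm : eLpNorm (fun p : ℝ × ℝ => f (p.1 + h ^ 3, p.2) - f p) 2 volume
      = eLpNorm (fun p : ℝ × ℝ => f (p.1 + k ^ 2 * a, p.2) - f p) 2 volume := by
    rw [hka]
    rcases abs_cases h with ⟨he, _⟩ | ⟨he, _⟩
    · rw [he]
    · rw [he, xshift_sym f hf (h ^ 3)]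
      congr 1; funext p; ring_nf
  have haA : a * A = |h| * D := by
    rw [hadef, hsdef, hDdef, div_eq_mul_one_div, mul_assoc, calc2 A B hA hB]
  have hkB : k * B = |h| * D := by
    rw [hkdef, hsdef, hDdef, mul_assoc, calc1 A B hA hB]
  have step1 : ENNReal.ofReal |a| * Q1y f = ENNReal.ofReal (|h| * D) := by
    rw [abs_of_pos ha, hQA, ← ENNReal.ofReal_mul ha.le, haA]
  have step2 : ENNReal.ofReal |k| * Q12 f = ENNReal.ofReal (|h| * D) := by
    rw [abs_of_pos hk, hQB, ← ENNReal.ofReal_mul hk.le, hkB]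
  have main : eLpNorm (fun p : ℝ × ℝ => f (p.1 + k ^ 2 * a, p.2) - f p) 2 volume
      ≤ 2 * ENNReal.ofReal (|h| * D) + 2 * ENNReal.ofReal (|h| * D) := by
    have := telescope_bound f hf k a hk.ne' ha.ne'
    rwa [step1, step2] at this
  calc ENNReal.ofReal |h|⁻¹ *
        eLpNorm (fun p : ℝ × ℝ => f (p.1 + h ^ 3, p.2) - f p) 2 volume
      ≤ ENNReal.ofReal |h|⁻¹ * (2 * ENNReal.ofReal (|h| * D) + 2 * ENNReal.ofReal (|h| * D)) := by
        rw [hnorm]; exact mul_le_mul_right main _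
    _ = ENNReal.ofReal |h|⁻¹ * ENNReal.ofReal (|h| * (4 * D)) := by
        congr 1
        rw [show (2:ℝ≥0∞) = ENNReal.ofReal 2 by norm_num,
          ← ENNReal.ofReal_mul (by norm_num), ← ENNReal.ofReal_add (by positivity) (by positivity)]
        congr 1; ring
    _ = ENNReal.ofReal (4 * D) := by
        rw [← ENNReal.ofReal_mul (by positivity)]
        congr 1
        field_simp


end
end

section
/- There is a universal constant C > 0 such that for every f ∈ C_c^∞(ℝ²), one has ‖f‖_{Q^{1/3}_{∂x}} ≤ C ( ‖f‖_{Q¹_{∂y}} + ‖f‖_{Q^{1/2}_{y∂x}} ). -/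
open MeasureTheory ENNReal Real

noncomputable section

/-- Vertical translation `(x, y) ↦ (x, y + d)` preserves Lebesgue measure on `ℝ²`. -/
lemma transY_mp (d : ℝ) :
    MeasurePreserving (fun p : ℝ × ℝ => (p.1, p.2 + d))
      (volume : Measure (ℝ × ℝ)) volume :=
  (MeasurePreserving.id _).prod (measurePreserving_add_right volume d)

/-- Horizontal translation `(x, y) ↦ (x + c, y)` preserves Lebesgue measure on `ℝ²`. -/
lemma transX_mp (c : ℝ) :
    MeasurePreserving (fun p : ℝ × ℝ => (p.1 + c, p.2))
      (volume : Measure (ℝ × ℝ)) volume :=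
  (measurePreserving_add_right volume c).prod (MeasurePreserving.id _)

/-- The shear `(x, y) ↦ (x + b y, y)` preserves Lebesgue measure on `ℝ²`. -/
lemma shear_mp (b : ℝ) :
    MeasurePreserving (fun p : ℝ × ℝ => (p.1 + b * p.2, p.2))
      (volume : Measure (ℝ × ℝ)) volume := by
  have hs : MeasurePreserving (fun p : ℝ × ℝ => (p.1, p.2 + b * p.1))
      (volume : Measure (ℝ × ℝ)) volume := by
    refine MeasurePreserving.skew_product (MeasurePreserving.id _)
      (g := fun x y => y + b * x) (by fun_prop) ?_
    exact Filter.Eventually.of_forall fun x => map_add_right_eq_self volume (b * x)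
  have hswap : MeasurePreserving (Prod.swap : ℝ × ℝ → ℝ × ℝ)
      (volume : Measure (ℝ × ℝ)) volume := by
    rw [Measure.volume_eq_prod]; exact Measure.measurePreserving_swap
  exact (hswap.comp hs).comp hswap

lemma real_sign_mul_abs {h : ℝ} (hh : h ≠ 0) : Real.sign h * |h| = h := by
  rcases lt_or_gt_of_ne hh with hlt | hgt
  · rw [Real.sign_of_neg hlt, abs_of_neg hlt]; ring
  · rw [Real.sign_of_pos hgt, abs_of_pos hgt]; ring

/-- Sample bracket inequality (additive, unscaled form):
`‖f‖_{Q^{1/3}_{∂x}} ≤ C ( ‖f‖_{Q¹_{∂y}} + ‖f‖_{Q^{1/2}_{y∂x}} )`. -/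
theorem sample_bracket_inequality_additive :
    ∃ C : ℝ, 0 < C ∧ ∀ f : ℝ × ℝ → ℝ, ContDiff ℝ (⊤ : ℕ∞) f → HasCompactSupport f →
      Q13 f ≤ ENNReal.ofReal C * (Q1y f + Q12 f) := by
  refine ⟨2, two_pos, fun f hf _hfc => ?_⟩
  have hfc : Continuous f := hf.continuous
  rw [Q13]
  refine iSup_le ?_
  rintro ⟨h, hh⟩
  simp only
  have hane : |h| ≠ 0 := abs_ne_zero.mpr hh
  set a : ℝ := |h| with ha
  set b : ℝ := Real.sign h * h ^ 2 with hb
  have hab : b * a = h ^ 3 := by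
    rw [hb, ha, mul_comm (Real.sign h) (h ^ 2), mul_assoc, real_sign_mul_abs hh]; ring
  -- the four elementary difference functions
  set D1 : ℝ × ℝ → ℝ := fun p => f (p.1, p.2 + (-a)) - f p with hD1
  set D2 : ℝ × ℝ → ℝ := fun p => f (p.1 + (-b) * p.2, p.2) - f p with hD2
  set D3 : ℝ × ℝ → ℝ := fun p => f (p.1, p.2 + a) - f p with hD3
  set D4 : ℝ × ℝ → ℝ := fun p => f (p.1 + b * p.2, p.2) - f p with hD4
  -- the measure preserving changes of variables
  set τ1 : ℝ × ℝ → ℝ × ℝ := fun p => (p.1, p.2 + (-a)) with hτ1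
  set τ2 : ℝ × ℝ → ℝ × ℝ := fun p => (p.1 + (-b) * p.2 + b * a, p.2 + (-a)) with hτ2
  set τ3 : ℝ × ℝ → ℝ × ℝ := fun p => (p.1 + (-b) * p.2 + b * a, p.2) with hτ3
  have hτ1mp : MeasurePreserving τ1 (volume : Measure (ℝ × ℝ)) volume := transY_mp (-a)
  have hτ2mp : MeasurePreserving τ2 (volume : Measure (ℝ × ℝ)) volume := by
    have := (transY_mp (-a)).comp ((transX_mp (b * a)).comp (shear_mp (-b)))
    exact this
  have hτ3mp : MeasurePreserving τ3 (volume : Measure (ℝ × ℝ)) volume := by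
    have := (transX_mp (b * a)).comp (shear_mp (-b))
    exact this
  have hτ1c : Continuous τ1 := by rw [hτ1]; fun_prop
  have hτ2c : Continuous τ2 := by rw [hτ2]; fun_prop
  have hτ3c : Continuous τ3 := by rw [hτ3]; fun_prop
  have hD1c : Continuous D1 := by rw [hD1]; fun_prop
  have hD2c : Continuous D2 := by rw [hD2]; fun_prop
  have hD3c : Continuous D3 := by rw [hD3]; fun_prop
  have hD4c : Continuous D4 := by rw [hD4]; fun_prop
  -- the telescoping decomposition
  have hdecomp : (fun p : ℝ × ℝ => f (p.1 + h ^ 3, p.2) - f p)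
      = (D4 ∘ τ3) + ((D3 ∘ τ2) + ((D2 ∘ τ1) + D1)) := by
    funext p
    simp only [Pi.add_apply, Function.comp_apply, hD1, hD2, hD3, hD4, hτ1, hτ2, hτ3]
    rw [show p.1 + (-b) * p.2 + b * a + b * p.2 = p.1 + h ^ 3 by rw [← hab]; ring,
      show p.2 + (-a) + a = p.2 by ring,
      show p.1 + (-b) * (p.2 + (-a)) = p.1 + (-b) * p.2 + b * a by ring]
    ring
  -- triangle inequality and measure preservation
  have hN4 : eLpNorm (D4 ∘ τ3) 2 volume = eLpNorm D4 2 volume :=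
    eLpNorm_comp_measurePreserving hD4c.aestronglyMeasurable hτ3mp
  have hN3 : eLpNorm (D3 ∘ τ2) 2 volume = eLpNorm D3 2 volume :=
    eLpNorm_comp_measurePreserving hD3c.aestronglyMeasurable hτ2mp
  have hN2 : eLpNorm (D2 ∘ τ1) 2 volume = eLpNorm D2 2 volume :=
    eLpNorm_comp_measurePreserving hD2c.aestronglyMeasurable hτ1mp
  have htri : eLpNorm (fun p : ℝ × ℝ => f (p.1 + h ^ 3, p.2) - f p) 2 volume
      ≤ eLpNorm D4 2 volume + (eLpNorm D3 2 volume
        + (eLpNorm D2 2 volume + eLpNorm D1 2 volume)) := by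
    rw [hdecomp, ← hN4, ← hN3, ← hN2]
    refine le_trans (eLpNorm_add_le (hD4c.comp hτ3c).aestronglyMeasurable
      (((hD3c.comp hτ2c).add ((hD2c.comp hτ1c).add hD1c)).aestronglyMeasurable) one_le_two) ?_
    refine add_le_add_right ?_ _
    refine le_trans (eLpNorm_add_le (hD3c.comp hτ2c).aestronglyMeasurable
      (((hD2c.comp hτ1c).add hD1c).aestronglyMeasurable) one_le_two) ?_
    refine add_le_add_right ?_ _
    exact eLpNorm_add_le (hD2c.comp hτ1c).aestronglyMeasurable
      hD1c.aestronglyMeasurable one_le_two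
  -- bound each piece by the corresponding supremum
  have t4 : ENNReal.ofReal a⁻¹ * eLpNorm D4 2 volume ≤ Q12 f := by
    have := le_iSup (fun k : {k : ℝ // k ≠ 0} => ENNReal.ofReal |(k : ℝ)|⁻¹ *
      eLpNorm (fun p : ℝ × ℝ =>
        f (p.1 + Real.sign (k : ℝ) * (k : ℝ) ^ 2 * p.2, p.2) - f p) 2 volume) ⟨h, hh⟩
    rw [Q12]
    simpa [hD4, ← hb, ← ha] using this
  have t2 : ENNReal.ofReal a⁻¹ * eLpNorm D2 2 volume ≤ Q12 f := by
    have hsg : Real.sign (-h) * (-h) ^ 2 = -b := by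
      rw [Real.sign_neg, neg_sq, hb]; ring
    have key : ENNReal.ofReal |(-h)|⁻¹ * eLpNorm (fun p : ℝ × ℝ =>
        f (p.1 + Real.sign (-h) * (-h) ^ 2 * p.2, p.2) - f p) 2 volume ≤ Q12 f := by
      rw [Q12]
      exact le_iSup (fun k : {k : ℝ // k ≠ 0} => ENNReal.ofReal |(k : ℝ)|⁻¹ *
        eLpNorm (fun p : ℝ × ℝ =>
          f (p.1 + Real.sign (k : ℝ) * (k : ℝ) ^ 2 * p.2, p.2) - f p) 2 volume)
        ⟨-h, neg_ne_zero.mpr hh⟩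
    simp only [hsg] at key
    rw [abs_neg, ← ha] at key
    exact key
  have t3 : ENNReal.ofReal a⁻¹ * eLpNorm D3 2 volume ≤ Q1y f := by
    have := le_iSup (fun k : {k : ℝ // k ≠ 0} => ENNReal.ofReal |(k : ℝ)|⁻¹ *
      eLpNorm (fun p : ℝ × ℝ => f (p.1, p.2 + (k : ℝ)) - f p) 2 volume) ⟨a, hane⟩
    rw [Q1y]
    have haa : |a| = a := by rw [ha]; exact abs_abs h
    simpa [hD3, haa] using this
  have t1 : ENNReal.ofReal a⁻¹ * eLpNorm D1 2 volume ≤ Q1y f := by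
    have := le_iSup (fun k : {k : ℝ // k ≠ 0} => ENNReal.ofReal |(k : ℝ)|⁻¹ *
      eLpNorm (fun p : ℝ × ℝ => f (p.1, p.2 + (k : ℝ)) - f p) 2 volume)
      ⟨-a, neg_ne_zero.mpr hane⟩
    rw [Q1y]
    have haa : |(-a)| = a := by rw [abs_neg, ha]; exact abs_abs h
    simpa [hD1, haa] using this
  calc ENNReal.ofReal a⁻¹ * eLpNorm (fun p : ℝ × ℝ => f (p.1 + h ^ 3, p.2) - f p) 2 volume
      ≤ ENNReal.ofReal a⁻¹ * (eLpNorm D4 2 volume + (eLpNorm D3 2 volume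
        + (eLpNorm D2 2 volume + eLpNorm D1 2 volume))) := mul_le_mul_right htri _
    _ = ENNReal.ofReal a⁻¹ * eLpNorm D4 2 volume + (ENNReal.ofReal a⁻¹ * eLpNorm D3 2 volume
        + (ENNReal.ofReal a⁻¹ * eLpNorm D2 2 volume
          + ENNReal.ofReal a⁻¹ * eLpNorm D1 2 volume)) := by ring
    _ ≤ Q12 f + (Q1y f + (Q12 f + Q1y f)) :=
        add_le_add t4 (add_le_add t3 (add_le_add t2 t1))
    _ = ENNReal.ofReal 2 * (Q1y f + Q12 f) := by
        rw [ENNReal.ofReal_ofNat]; ring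

end
end
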